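/- Let n ≥ 2 and let f : ℝⁿ → ℝ be smooth with compact support in the open unit ball. Via the substitution relating radius along the cone to the angle α via r = sin(α)/sin(ψ+α), the representation (Cf)(e₁,ψ) = ∫₀^{π−2ψ} U(sin α / sin(ψ+α)) (sin ψ)^{n−1} (sin α)^{n−2} / (sin(ψ+α))ⁿ · ∫_{S^{n−2}} f((sin ψ / sin(ψ+α)) (cos α, sin α · η)) dS(η) dα holds for all ψ ∈ (0, π/2]; in particular, along the cone with vertex e₁ and angle ψ, every point z + rω of the cone at distance r from the vertex has norm ‖z + rω‖ = sin ψ / sin(ψ + α) where α is determined by r = sin α / sin(ψ + α), and points with r corresponding to α ∈ (0, π − 2ψ) are exactly those inside the open unit ball. -/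

import Mathlib

open MeasureTheory Real Set Topology
open scoped RealInnerProductSpace Pointwise NNReal ENNReal

def coneDirs (n : ℕ) (z : EuclideanSpace ℝ (Fin n)) (ψ : ℝ) :
    Set (EuclideanSpace ℝ (Fin n)) :=
  {ω | ‖ω‖ = 1 ∧ -⟪ω, z⟫ = Real.cos ψ}

/-- The weighted conical Radon transform with vertex `z` on the unit sphere. -/
noncomputable def coneCRT (n : ℕ) (U : ℝ → ℝ) (f : EuclideanSpace ℝ (Fin n) → ℝ)
    (z : EuclideanSpace ℝ (Fin n)) (ψ : ℝ) : ℝ :=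
  ∫ r in Ioi (0 : ℝ),
    (∫ ω in coneDirs n z ψ, f (z + r • ω) * U r ∂(μH[(n : ℝ) - 2])) * r ^ ((n : ℝ) - 2)

/-- The point `(a, y) ∈ ℝ × ℝ^{m+1} ≅ ℝ^{m+2}`. -/
noncomputable def pt (m : ℕ) (a : ℝ) (y : EuclideanSpace ℝ (Fin (m + 1))) :
    EuclideanSpace ℝ (Fin (m + 2)) :=
  (WithLp.equiv 2 (Fin (m + 2) → ℝ)).symm
    (Fin.cons a (WithLp.equiv 2 (Fin (m + 1) → ℝ) y))

section Aux

variable {m : ℕ}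

lemma pt_zero (a : ℝ) (y : EuclideanSpace ℝ (Fin (m+1))) : pt m a y 0 = a := rfl

lemma pt_succ (a : ℝ) (y : EuclideanSpace ℝ (Fin (m+1))) (i : Fin (m+1)) :
    pt m a y i.succ = y i := rfl

lemma pt_ext {x : EuclideanSpace ℝ (Fin (m+2))} {a : ℝ} {y : EuclideanSpace ℝ (Fin (m+1))}
    (h0 : x 0 = a) (hs : ∀ i : Fin (m+1), x i.succ = y i) : x = pt m a y := by
  apply PiLp.ext
  intro i
  induction i using Fin.cases with
  | zero => exact h0
  | succ i => exact hs i

lemma norm_pt_sq (a : ℝ) (y : EuclideanSpace ℝ (Fin (m+1))) :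
    ‖pt m a y‖ ^ 2 = a ^ 2 + ‖y‖ ^ 2 := by
  rw [← real_inner_self_eq_norm_sq, ← real_inner_self_eq_norm_sq]
  simp only [PiLp.inner_apply, RCLike.inner_apply, conj_trivial]
  rw [Fin.sum_univ_succ]
  simp [pt_zero, pt_succ, sq]

lemma norm_pt_zero (y : EuclideanSpace ℝ (Fin (m+1))) : ‖pt m 0 y‖ = ‖y‖ := by
  have h := norm_pt_sq (m := m) 0 y
  rw [← Real.sqrt_sq (norm_nonneg (pt m 0 y)), h]
  simp [Real.sqrt_sq (norm_nonneg y)]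

lemma pt_sub (y y' : EuclideanSpace ℝ (Fin (m+1))) :
    pt m 0 y - pt m 0 y' = pt m 0 (y - y') := by
  refine pt_ext ?_ ?_ <;> simp [pt_zero, pt_succ]

lemma isometry_pt0 : Isometry (pt m 0) := by
  apply Isometry.of_dist_eq
  intro y y'
  rw [dist_eq_norm, dist_eq_norm, pt_sub, norm_pt_zero]

lemma pt_decomp (a : ℝ) (y : EuclideanSpace ℝ (Fin (m+1))) :
    pt m a y = pt m 0 y + EuclideanSpace.single (0 : Fin (m+2)) a := by
  refine (pt_ext ?_ ?_).symm <;> intros <;>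
    simp [pt_zero, pt_succ, EuclideanSpace.single_apply, Fin.succ_ne_zero]

lemma smul_pt (c a : ℝ) (y : EuclideanSpace ℝ (Fin (m+1))) :
    c • pt m a y = pt m (c * a) (c • y) := by
  refine pt_ext ?_ ?_ <;> simp [pt_zero, pt_succ]

lemma inner_pt_single (x : EuclideanSpace ℝ (Fin (m+2))) :
    ⟪x, EuclideanSpace.single (0 : Fin (m+2)) (1:ℝ)⟫ = x 0 := by
  rw [EuclideanSpace.inner_single_right]
  simp

/-- the scaled embedding `G` -/
noncomputable def Gmap (m : ℕ) (a s : ℝ) (η : EuclideanSpace ℝ (Fin (m+1))) :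
    EuclideanSpace ℝ (Fin (m+2)) := pt m a (s • η)

variable {s : ℝ} (hs : s ≠ 0) (a : ℝ)

lemma Gmap_eq : Gmap m a s = (fun x => x + EuclideanSpace.single (0 : Fin (m+2)) a) ∘
    (pt m 0) ∘ (fun η => s • η) := by
  funext η
  simp only [Function.comp_apply]
  exact pt_decomp a (s • η)

include hs in
lemma Gmap_closedEmbedding : IsClosedEmbedding (Gmap m a s) := by
  rw [Gmap_eq]
  exact ((IsometryEquiv.addRight
      (EuclideanSpace.single (0 : Fin (m+2)) a)).isometry.isClosedEmbedding).comp
    (isometry_pt0.isClosedEmbedding.comp (Homeomorph.smulOfNeZero s hs).isClosedEmbedding)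

include hs in
lemma Gmap_hausdorff_image (B : Set (EuclideanSpace ℝ (Fin (m+1)))) :
    μH[(m:ℝ)] (Gmap m a s '' B) = (‖s‖₊ ^ (m:ℝ)) • μH[(m:ℝ)] B := by
  rw [Gmap_eq, Set.image_comp, Set.image_comp]
  have hT : (fun x : EuclideanSpace ℝ (Fin (m+2)) => x + EuclideanSpace.single (0 : Fin (m+2)) a)
      = ⇑(IsometryEquiv.addRight (EuclideanSpace.single (0 : Fin (m+2)) a)) := rfl
  rw [hT, (IsometryEquiv.addRight _).isometry.hausdorffMeasure_image
    (Or.inr (IsometryEquiv.addRight _).surjective)]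
  rw [isometry_pt0.hausdorffMeasure_image (Or.inl (by positivity))]
  have : (fun η : EuclideanSpace ℝ (Fin (m+1)) => s • η) '' B = s • B := rfl
  rw [this, MeasureTheory.Measure.hausdorffMeasure_smul₀ (by positivity) hs]

include hs in
lemma Gmap_restrict (S : Set (EuclideanSpace ℝ (Fin (m+1)))) :
    μH[(m:ℝ)].restrict (Gmap m a s '' S) =
      Measure.map (Gmap m a s) (((‖s‖₊ ^ (m:ℝ) : ℝ≥0) : ℝ≥0∞) • μH[(m:ℝ)].restrict S) := by
  have hemb := (Gmap_closedEmbedding hs a (m := m)).measurableEmbedding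
  ext A hA
  rw [Measure.restrict_apply hA, hemb.map_apply, Measure.smul_apply,
    Measure.restrict_apply (hemb.measurable hA)]
  rw [Set.inter_comm A, ← Set.image_inter_preimage, Set.inter_comm S]
  rw [Gmap_hausdorff_image hs a]
  rfl

include hs in
lemma Gmap_integral (S : Set (EuclideanSpace ℝ (Fin (m+1))))
    (h : EuclideanSpace ℝ (Fin (m+2)) → ℝ) :
    ∫ x in Gmap m a s '' S, h x ∂μH[(m:ℝ)]
      = |s| ^ m * ∫ η in S, h (Gmap m a s η) ∂μH[(m:ℝ)] := by
  have hemb := (Gmap_closedEmbedding hs a (m := m)).measurableEmbedding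
  rw [Gmap_restrict hs a S, hemb.integral_map, integral_smul_measure]
  have : (((‖s‖₊ ^ (m:ℝ) : ℝ≥0) : ℝ≥0∞)).toReal = |s| ^ m := by
    rw [ENNReal.coe_toReal, NNReal.rpow_natCast]
    push_cast
    simp [Real.norm_eq_abs]
  rw [this, smul_eq_mul]

/- trigonometric lemmas -/

lemma trig_key (ψ α : ℝ) :
    Real.sin (ψ+α)^2 - 2 * Real.sin α * Real.cos ψ * Real.sin (ψ+α) + Real.sin α ^2
      = Real.sin ψ ^2 := by
  rw [Real.sin_add]
  linear_combination (Real.sin ψ)^2 * (Real.sin_sq_add_cos_sq α)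
    - (Real.sin α)^2 * (Real.sin_sq_add_cos_sq ψ)

lemma trig_key2 (ψ α : ℝ) :
    Real.sin (2*ψ+α) = 2 * Real.cos ψ * Real.sin (ψ+α) - Real.sin α := by
  have h : 2*ψ+α = ψ + (ψ+α) := by ring
  rw [h, Real.sin_add, Real.cos_add, Real.sin_add]
  linear_combination (-Real.sin α) * (Real.sin_sq_add_cos_sq ψ)

variable {ψ : ℝ} (hψ : ψ ∈ Set.Ioc 0 (π/2))

section
include hψ

lemma sin_psi_pos : 0 < Real.sin ψ :=
  Real.sin_pos_of_pos_of_lt_pi hψ.1 (lt_of_le_of_lt hψ.2 (by linarith [Real.pi_pos]))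

lemma sin_shift_pos {α : ℝ} (h0 : 0 ≤ α) (hL : α ≤ π - 2*ψ) : 0 < Real.sin (ψ + α) := by
  apply Real.sin_pos_of_pos_of_lt_pi (by linarith [hψ.1])
  have := hψ.1; linarith

lemma phi_hasDerivAt {α : ℝ} (h0 : 0 ≤ α) (hL : α ≤ π - 2*ψ) :
    HasDerivAt (fun α => Real.sin α / Real.sin (ψ + α))
      (Real.sin ψ / Real.sin (ψ + α)^2) α := by
  have hspos := sin_shift_pos hψ h0 hL
  have h1 : HasDerivAt Real.sin (Real.cos α) α := Real.hasDerivAt_sin α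
  have h2 : HasDerivAt (fun α => Real.sin (ψ + α)) (Real.cos (ψ + α)) α := by
    exact (Real.hasDerivAt_sin (ψ+α)).comp_const_add ψ α
  have := h1.div h2 hspos.ne'
  refine this.congr_deriv ?_
  have he : Real.sin ψ = Real.sin ((ψ + α) - α) := by ring_nf
  rw [he, Real.sin_sub]
  ring

lemma phi_pos {α : ℝ} (h : α ∈ Set.Ioo 0 (π - 2*ψ)) :
    0 < Real.sin α / Real.sin (ψ + α) := by
  have := hψ.1
  apply div_pos (Real.sin_pos_of_pos_of_lt_pi h.1 (by linarith [h.2]))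
    (sin_shift_pos hψ h.1.le h.2.le)

lemma phi_lt {α : ℝ} (h : α ∈ Set.Ioo 0 (π - 2*ψ)) :
    Real.sin α / Real.sin (ψ + α) < 2 * Real.cos ψ := by
  have hspos := sin_shift_pos hψ h.1.le h.2.le
  rw [div_lt_iff₀ hspos]
  have h2 : 0 < Real.sin (2*ψ + α) := by
    apply Real.sin_pos_of_pos_of_lt_pi (by linarith [hψ.1, h.1]) (by linarith [h.2, hψ.1])
  rw [trig_key2 ψ α] at h2
  linarith

lemma phi_injOn : Set.InjOn (fun α => Real.sin α / Real.sin (ψ + α)) (Set.Ioo 0 (π - 2*ψ)) := by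
  intro a ha b hb hab
  have hsa := sin_shift_pos hψ ha.1.le ha.2.le
  have hsb := sin_shift_pos hψ hb.1.le hb.2.le
  have h : Real.sin a * Real.sin (ψ + b) = Real.sin b * Real.sin (ψ + a) := by
    field_simp at hab
    linarith [hab]
  rw [Real.sin_add, Real.sin_add] at h
  have h2 : Real.sin ψ * Real.sin (a - b) = 0 := by
    rw [Real.sin_sub]; ring_nf; ring_nf at h; linarith
  have h3 : Real.sin (a - b) = 0 := by
    rcases mul_eq_zero.mp h2 with h' | h'
    · exact absurd h' (sin_psi_pos hψ).ne'
    · exact h'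
  have hpi := Real.pi_pos
  have h4 := hψ.1
  have := (Real.sin_eq_zero_iff_of_lt_of_lt (x := a - b)
      (by linarith [ha.1, ha.2, hb.1, hb.2, hpi])
      (by linarith [ha.1, ha.2, hb.1, hb.2, hpi])).mp h3
  linarith [this]

lemma phi_surj {r : ℝ} (h0 : 0 < r) (h1 : r < 2 * Real.cos ψ) :
    ∃ α ∈ Set.Ioo 0 (π - 2*ψ), r = Real.sin α / Real.sin (ψ + α) := by
  have hcos : 0 < Real.cos ψ := by nlinarith
  have hψ2 : ψ < π/2 := by
    rcases lt_or_eq_of_le hψ.2 with h | h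
    · exact h
    · rw [h, Real.cos_pi_div_two] at hcos; norm_num at hcos
  have hL : (0:ℝ) < π - 2*ψ := by linarith
  set g : ℝ → ℝ := fun α => Real.sin α - r * Real.sin (ψ + α) with hg
  have hcont : ContinuousOn g (Set.Icc 0 (π - 2*ψ)) := by
    apply Continuous.continuousOn; continuity
  have hg0 : g 0 < 0 := by
    simp only [hg, Real.sin_zero, add_zero]
    have := sin_psi_pos hψ; nlinarith
  have hgL : 0 < g (π - 2*ψ) := by
    simp only [hg]
    have e1 : ψ + (π - 2*ψ) = π - ψ := by ring
    have e2 : Real.sin (π - 2*ψ) = Real.sin (2*ψ) := by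
      rw [Real.sin_pi_sub]
    rw [e1, e2, Real.sin_pi_sub, Real.sin_two_mul]
    have := sin_psi_pos hψ; nlinarith
  have hiv := intermediate_value_Ioo hL.le hcont
  have h0mem : (0:ℝ) ∈ Set.Ioo (g 0) (g (π - 2*ψ)) := ⟨hg0, hgL⟩
  obtain ⟨α, hα, hgα⟩ := hiv h0mem
  refine ⟨α, hα, ?_⟩
  have hspos := sin_shift_pos hψ hα.1.le hα.2.le
  have : Real.sin α = r * Real.sin (ψ + α) := by
    simp only [hg] at hgα; linarith
  field_simp [this]
  linarith

/-- the image of the angle interval under φ -/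
lemma phi_image : (fun α => Real.sin α / Real.sin (ψ + α)) '' (Set.Ioo 0 (π - 2*ψ))
    = Set.Ioo 0 (2 * Real.cos ψ) := by
  ext r
  constructor
  · rintro ⟨α, hα, rfl⟩
    exact ⟨phi_pos hψ hα, phi_lt hψ hα⟩
  · rintro ⟨h0, h1⟩
    obtain ⟨α, hα, hr⟩ := phi_surj hψ h0 h1
    exact ⟨α, hα, hr.symm⟩

/-- identity `1 - φ(α) cos ψ = sin ψ cos α / sin(ψ+α)` -/
lemma one_sub_phi_cos {α : ℝ} (h : α ∈ Set.Ioo 0 (π - 2*ψ)) :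
    1 - (Real.sin α / Real.sin (ψ + α)) * Real.cos ψ
      = Real.sin ψ * Real.cos α / Real.sin (ψ + α) := by
  have hspos := sin_shift_pos hψ h.1.le h.2.le
  field_simp
  rw [Real.sin_add]
  ring

end

end Aux

/- the cone as image of the unit sphere -/
lemma coneDirs_eq {m : ℕ} {ψ : ℝ} (hψ : ψ ∈ Set.Ioc 0 (π/2)) :
    coneDirs (m+2) (EuclideanSpace.single (0 : Fin (m+2)) (1:ℝ)) ψ
      = Gmap m (-Real.cos ψ) (Real.sin ψ) '' (Metric.sphere 0 1) := by
  have hsψ := sin_psi_pos hψ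
  ext ω
  constructor
  · rintro ⟨hω1, hω2⟩
    rw [inner_pt_single] at hω2
    set y : EuclideanSpace ℝ (Fin (m+1)) :=
      (WithLp.equiv 2 (Fin (m+1) → ℝ)).symm (fun i => ω i.succ) with hy
    have hωy : ω = pt m (ω 0) y := pt_ext rfl (fun i => rfl)
    have hny : ‖y‖ ^ 2 = Real.sin ψ ^ 2 := by
      have h1 : ‖ω‖ ^ 2 = (ω 0) ^ 2 + ‖y‖ ^ 2 := by rw [hωy] at hω1 ⊢; exact norm_pt_sq _ _
      have h2 : (ω 0) = -Real.cos ψ := by linarith [hω2]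
      rw [hω1, h2] at h1
      have := Real.sin_sq_add_cos_sq ψ
      nlinarith
    have hny' : ‖y‖ = Real.sin ψ := by
      rw [← Real.sqrt_sq (norm_nonneg y), hny, Real.sqrt_sq hsψ.le]
    refine ⟨(Real.sin ψ)⁻¹ • y, ?_, ?_⟩
    · rw [mem_sphere_zero_iff_norm, norm_smul, hny', Real.norm_eq_abs, abs_of_pos
        (inv_pos.mpr hsψ)]
      exact inv_mul_cancel₀ hsψ.ne'
    · rw [Gmap, smul_smul, mul_inv_cancel₀ hsψ.ne', one_smul]
      have hω0 : ω 0 = -Real.cos ψ := by linarith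
      rw [hωy, hω0]
  · rintro ⟨η, hη, rfl⟩
    rw [mem_sphere_zero_iff_norm] at hη
    constructor
    · have h1 : ‖Gmap m (-Real.cos ψ) (Real.sin ψ) η‖ ^ 2 = 1 := by
        rw [Gmap, norm_pt_sq, norm_smul, hη]
        have h2 := Real.sin_sq_add_cos_sq ψ
        have h3 := sq_abs (Real.sin ψ)
        simp only [Real.norm_eq_abs, mul_one]
        nlinarith
      rw [← Real.sqrt_sq (norm_nonneg _), h1, Real.sqrt_one]
    · rw [inner_pt_single, Gmap, pt_zero]
      ring

lemma e1_add_smul_G {m : ℕ} (ψ r : ℝ) (η : EuclideanSpace ℝ (Fin (m+1))) :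
    EuclideanSpace.single (0 : Fin (m+2)) (1:ℝ) + r • Gmap m (-Real.cos ψ) (Real.sin ψ) η
      = pt m (1 - r * Real.cos ψ) ((r * Real.sin ψ) • η) := by
  refine pt_ext ?_ ?_
  · simp [Gmap, pt_zero, EuclideanSpace.single_apply]
    ring
  · intro i
    simp [Gmap, pt_succ, EuclideanSpace.single_apply, Fin.succ_ne_zero]
    ring

lemma norm_pt_cone {m : ℕ} (ψ r : ℝ) {η : EuclideanSpace ℝ (Fin (m+1))} (hη : ‖η‖ = 1) :
    ‖pt m (1 - r * Real.cos ψ) ((r * Real.sin ψ) • η)‖ ^ 2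
      = 1 - 2 * r * Real.cos ψ + r ^ 2 := by
  rw [norm_pt_sq, norm_smul, hη, mul_one, Real.norm_eq_abs, sq_abs]
  have := Real.sin_sq_add_cos_sq ψ
  nlinarith
/-- angular parametrization of the conical Radon transform via the substitution
`r = sin α / sin(ψ+α)`:
`(Cf)(e₁,ψ) = ∫₀^{π-2ψ} U(sin α/sin(ψ+α)) (sin ψ)^{n-1}(sin α)^{n-2}/(sin(ψ+α))ⁿ`
`· ∫_{S^{n-2}} f((sin ψ/sin(ψ+α))(cos α, sin α η)) dS(η) dα`;
moreover every cone point `e₁ + rω` has norm `sin ψ/sin(ψ+α)` when `r = sin α/sin(ψ+α)`,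
and the points of the cone inside the open unit ball are exactly those with
`α ∈ (0, π - 2ψ)`.  Here `n = m + 2`. -/
theorem coneCRT_angular_param (m : ℕ) (U : ℝ → ℝ) (hU : Continuous U)
    (hUpos : ∀ r : ℝ, 0 ≤ r → 0 ≤ U r)
    (f : EuclideanSpace ℝ (Fin (m + 2)) → ℝ) (hf : ContDiff ℝ (⊤ : ℕ∞) f)
    (hsupp : tsupport f ⊆ Metric.ball (0 : EuclideanSpace ℝ (Fin (m + 2))) 1)
    (ψ : ℝ) (hψ : ψ ∈ Ioc 0 (π / 2)) :
    coneCRT (m + 2) U f (EuclideanSpace.single (0 : Fin (m + 2)) (1 : ℝ)) ψ =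
      (∫ α in Ioo (0 : ℝ) (π - 2 * ψ),
        U (Real.sin α / Real.sin (ψ + α)) *
          (Real.sin ψ) ^ (m + 1) * (Real.sin α) ^ m / (Real.sin (ψ + α)) ^ (m + 2) *
          ∫ η in Metric.sphere (0 : EuclideanSpace ℝ (Fin (m + 1))) 1,
            f ((Real.sin ψ / Real.sin (ψ + α)) •
              pt m (Real.cos α) (Real.sin α • η)) ∂(μH[(m : ℝ)])) ∧
    (∀ ω : EuclideanSpace ℝ (Fin (m + 2)), ‖ω‖ = 1 →
      -⟪ω, EuclideanSpace.single (0 : Fin (m + 2)) (1 : ℝ)⟫ = Real.cos ψ →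
      (∀ α ∈ Ioo (0 : ℝ) (π - 2 * ψ),
        ‖EuclideanSpace.single (0 : Fin (m + 2)) (1 : ℝ) +
            (Real.sin α / Real.sin (ψ + α)) • ω‖ = Real.sin ψ / Real.sin (ψ + α)) ∧
      ∀ r : ℝ, 0 < r →
        (‖EuclideanSpace.single (0 : Fin (m + 2)) (1 : ℝ) + r • ω‖ < 1 ↔
          ∃ α ∈ Ioo (0 : ℝ) (π - 2 * ψ), r = Real.sin α / Real.sin (ψ + α))) := by
  have hsψ := sin_psi_pos hψ
  have hm : ((m+2:ℕ):ℝ) - 2 = (m:ℝ) := by push_cast; ring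
  have hzero : ∀ x : EuclideanSpace ℝ (Fin (m + 2)), 1 ≤ ‖x‖ → f x = 0 := by
    intro x hx
    apply image_eq_zero_of_notMem_tsupport
    intro hmem
    have := hsupp hmem
    rw [mem_ball_zero_iff] at this
    linarith
  constructor
  · -- the integral identity
    set g : ℝ → ℝ := fun r =>
      (∫ η in Metric.sphere (0 : EuclideanSpace ℝ (Fin (m + 1))) 1,
        f (pt m (1 - r * Real.cos ψ) ((r * Real.sin ψ) • η)) ∂μH[(m:ℝ)]) * U r * r ^ m
      with hgdef
    have step1 : coneCRT (m + 2) U f (EuclideanSpace.single (0 : Fin (m + 2)) (1 : ℝ)) ψ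
        = ∫ r in Ioi (0:ℝ), Real.sin ψ ^ m * g r := by
      unfold coneCRT
      rw [hm]
      apply setIntegral_congr_fun measurableSet_Ioi
      intro r _
      dsimp only
      rw [coneDirs_eq hψ, Gmap_integral hsψ.ne', abs_of_pos hsψ, Real.rpow_natCast]
      simp only [e1_add_smul_G]
      rw [integral_mul_const]
      simp only [hgdef]
      ring
    have step3 : ∫ r in Ioi (0:ℝ), g r = ∫ r in Ioo (0:ℝ) (2 * Real.cos ψ), g r := by
      rw [← integral_indicator measurableSet_Ioi, ← integral_indicator measurableSet_Ioo]
      congr 1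
      funext r
      by_cases h1 : r ∈ Ioo (0:ℝ) (2 * Real.cos ψ)
      · rw [indicator_of_mem h1, indicator_of_mem (mem_Ioi.mpr h1.1)]
      · rw [indicator_of_notMem h1]
        by_cases h2 : r ∈ Ioi (0:ℝ)
        · rw [indicator_of_mem h2]
          rw [mem_Ioi] at h2
          have hr2 : 2 * Real.cos ψ ≤ r := by
            by_contra hcon
            exact h1 ⟨h2, lt_of_not_ge hcon⟩
          have hvanish : ∀ η ∈ Metric.sphere (0 : EuclideanSpace ℝ (Fin (m + 1))) 1,
              f (pt m (1 - r * Real.cos ψ) ((r * Real.sin ψ) • η)) = (0:ℝ) := by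
            intro η hη
            rw [mem_sphere_zero_iff_norm] at hη
            apply hzero
            have hn := norm_pt_cone ψ r hη
            nlinarith [norm_nonneg (pt m (1 - r * Real.cos ψ) ((r * Real.sin ψ) • η))]
          simp only [hgdef]
          rw [setIntegral_congr_fun Metric.isClosed_sphere.measurableSet hvanish]
          simp
        · rw [indicator_of_notMem h2]
    have step4 : Ioo (0:ℝ) (2 * Real.cos ψ)
        = (fun α => Real.sin α / Real.sin (ψ + α)) '' Ioo 0 (π - 2*ψ) := (phi_image hψ).symm
    have step5 : ∫ r in Ioo (0:ℝ) (2 * Real.cos ψ), g r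
        = ∫ α in Ioo (0:ℝ) (π - 2*ψ),
            |Real.sin ψ / Real.sin (ψ + α)^2| • g (Real.sin α / Real.sin (ψ + α)) := by
      rw [step4]
      exact integral_image_eq_integral_abs_deriv_smul measurableSet_Ioo
        (fun α hα => (phi_hasDerivAt hψ hα.1.le hα.2.le).hasDerivWithinAt)
        (phi_injOn hψ) g
    rw [step1, integral_const_mul, step3, step5, ← integral_const_mul]
    apply setIntegral_congr_fun measurableSet_Ioo
    intro α hα
    have hs2 := sin_shift_pos hψ hα.1.le hα.2.le
    have hsα : 0 < Real.sin α := by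
      have := hψ.1
      exact Real.sin_pos_of_pos_of_lt_pi hα.1 (by linarith [hα.2])
    have habs : |Real.sin ψ / Real.sin (ψ + α)^2| = Real.sin ψ / Real.sin (ψ + α)^2 :=
      abs_of_pos (div_pos hsψ (pow_pos hs2 2))
    have hpt : ∀ η : EuclideanSpace ℝ (Fin (m + 1)),
        (Real.sin ψ / Real.sin (ψ + α)) • pt m (Real.cos α) (Real.sin α • η)
          = pt m (1 - (Real.sin α / Real.sin (ψ + α)) * Real.cos ψ)
              (((Real.sin α / Real.sin (ψ + α)) * Real.sin ψ) • η) := by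
      intro η
      have e1 : Real.sin ψ / Real.sin (ψ + α) * Real.cos α
          = Real.sin ψ * Real.cos α / Real.sin (ψ + α) := by ring
      have e2 : Real.sin ψ / Real.sin (ψ + α) * Real.sin α
          = Real.sin α / Real.sin (ψ + α) * Real.sin ψ := by ring
      rw [smul_pt, smul_smul, e1, e2, one_sub_phi_cos hψ hα]
    simp only [hgdef, hpt, smul_eq_mul, habs]
    rw [div_pow (Real.sin α)]
    field_simp
    ring
  · -- the geometric part
    intro ω hω1 hω2
    have hinner : ⟪EuclideanSpace.single (0 : Fin (m + 2)) (1 : ℝ), ω⟫ = -Real.cos ψ := by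
      rw [real_inner_comm]
      linarith [hω2]
    have hns : ∀ r : ℝ, ‖EuclideanSpace.single (0 : Fin (m + 2)) (1 : ℝ) + r • ω‖ ^ 2
        = 1 - 2 * r * Real.cos ψ + r ^ 2 := by
      intro r
      rw [norm_add_sq_real, real_inner_smul_right, hinner, norm_smul, hω1,
        EuclideanSpace.norm_single]
      simp only [Real.norm_eq_abs, abs_one, mul_one, sq_abs]
      ring
    constructor
    · intro α hα
      have hs2 := sin_shift_pos hψ hα.1.le hα.2.le
      have hc : 0 < Real.sin ψ / Real.sin (ψ + α) := div_pos hsψ hs2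
      have hsq : ‖EuclideanSpace.single (0 : Fin (m + 2)) (1 : ℝ) +
          (Real.sin α / Real.sin (ψ + α)) • ω‖ ^ 2 = (Real.sin ψ / Real.sin (ψ + α)) ^ 2 := by
        rw [hns]
        have hk := trig_key ψ α
        field_simp
        linear_combination hk
      rw [← Real.sqrt_sq (norm_nonneg _), hsq, Real.sqrt_sq hc.le]
    · intro r hr
      have key : ‖EuclideanSpace.single (0 : Fin (m + 2)) (1 : ℝ) + r • ω‖ < 1 ↔
          r < 2 * Real.cos ψ := by
        constructor
        · intro h
          have h2 : ‖EuclideanSpace.single (0 : Fin (m + 2)) (1 : ℝ) + r • ω‖ ^ 2 < 1 := by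
            nlinarith [norm_nonneg (EuclideanSpace.single (0 : Fin (m + 2)) (1 : ℝ) + r • ω)]
          rw [hns r] at h2
          nlinarith
        · intro h
          have h2 : ‖EuclideanSpace.single (0 : Fin (m + 2)) (1 : ℝ) + r • ω‖ ^ 2 < 1 := by
            rw [hns r]; nlinarith
          nlinarith [norm_nonneg (EuclideanSpace.single (0 : Fin (m + 2)) (1 : ℝ) + r • ω)]
      rw [key]
      constructor
      · exact fun h => phi_surj hψ hr h
      · rintro ⟨α, hα, rfl⟩
        exact phi_lt hψ hα
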